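/- arXiv:2008.07123 — 4 statements merged into one kernel-verified Lean document; each statement's English description precedes it below -/
import Mathlib

section
/- Let F be a finite nonempty set of function symbols, each f with a fixed arity ar(f), and let T(F) be the set of (ground) terms over F. Let < be a proper order (irreflexive and transitive relation) on T(F), and for each f ∈ F let <_f be a relation on the set of ar(f)-tuples of terms. Assume: (1) < contains the subterm relation, i.e., every proper subterm s of a term t satisfies s < t; (2) for every f and all tuples a, b, if f(b) < f(a) then either f(b) ≤ a_i for some component a_i of a, or b <_f a; (3) for every f and every tuple a, if every component of a lies in the well-founded (accessible) part W(<) of <, then a lies in the well-founded part W(<_f) of <_f. Then every term of T(F) lies in W(<); equivalently, < is a well-founded relation on T(F). -/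
/-- Ground terms over a signature `F` with arity function `ar`,
modeled as the W-type of finitely branching trees. -/
def Term (F : Type) (ar : F → ℕ) : Type := WType (fun f : F => Fin (ar f))

/-- Size of a finitely-branching W-type tree. -/
noncomputable def fzSize {α : Type} {β : α → Type} [∀ a, Fintype (β a)] :
    WType β → ℕ
  | WType.mk _ a => (Finset.univ.sup fun i => fzSize (a i)) + 1

lemma fzSize_lt {α : Type} {β : α → Type} [∀ a, Fintype (β a)]
    (f : α) (a : β f → WType β) (i : β f) :
    fzSize (a i) < fzSize (WType.mk f a) := by
  rw [fzSize]
  exact Nat.lt_succ_of_le (Finset.le_sup (f := fun i => fzSize (a i)) (Finset.mem_univ i))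

/-- Root symbol of a tree. -/
def fzRoot {α : Type} {β : α → Type} : WType β → α
  | WType.mk f _ => f

noncomputable def termSize {F : Type} {ar : F → ℕ} (t : Term F ar) : ℕ :=
  @fzSize F (fun f => Fin (ar f)) (fun _ => inferInstance) t

lemma termSize_lt {F : Type} {ar : F → ℕ} (f : F) (a : Fin (ar f) → Term F ar)
    (i : Fin (ar f)) : termSize (a i) < termSize (WType.mk f a : Term F ar) :=
  @fzSize_lt F (fun g => Fin (ar g)) (fun _ => inferInstance) f a i

lemma fz_exists_min {α : Type*} (S : Set α) (f : α → ℕ) (h : S.Nonempty) :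
    ∃ a ∈ S, ∀ b ∈ S, f a ≤ f b := by
  classical
  obtain ⟨a, ha⟩ := h
  have hp : ∃ n, ∃ a ∈ S, f a = n := ⟨f a, a, ha, rfl⟩
  obtain ⟨a', ha', hfa'⟩ := Nat.find_spec hp
  refine ⟨a', ha', fun b hb => ?_⟩
  rw [hfa']
  exact Nat.find_min' hp ⟨b, hb, rfl⟩

lemma fz_no_descend {α : Sort*} {r : α → α → Prop} {x : α} (h : Acc r x) :
    ∀ u : ℕ → α, u 0 = x → (∀ k, r (u (k+1)) (u k)) → False := by
  induction h with
  | intro x _ ih =>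
    intro u h0 hs
    exact ih (u 1) (by rw [← h0]; exact hs 0) (fun k => u (k+1)) rfl (fun k => hs (k+1))

theorem ferreira_zantema
    {F : Type} [Fintype F] [Nonempty F] (ar : F → ℕ)
    (lt : Term F ar → Term F ar → Prop)
    (ltf : ∀ f : F, (Fin (ar f) → Term F ar) → (Fin (ar f) → Term F ar) → Prop)
    (hirr : ∀ t, ¬ lt t t)
    (htrans : ∀ s t u, lt s t → lt t u → lt s u)
    (hsub : ∀ (f : F) (a : Fin (ar f) → Term F ar) (i : Fin (ar f)),
      lt (a i) (WType.mk f a))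
    (hdec : ∀ (f : F) (a b : Fin (ar f) → Term F ar),
      lt (WType.mk f b) (WType.mk f a) →
      (∃ i, WType.mk f b = a i ∨ lt (WType.mk f b) (a i)) ∨ ltf f b a)
    (hacc : ∀ (f : F) (a : Fin (ar f) → Term F ar),
      (∀ i, Acc lt (a i)) → Acc (ltf f) a) :
    ∀ t : Term F ar, Acc lt t := by
  classical
  by_contra hcon
  push_neg at hcon
  obtain ⟨tbad, htbad⟩ := hcon
  -- choose a minimal (w.r.t. size) inaccessible term
  obtain ⟨t0, ht0, ht0min⟩ :=
    fz_exists_min {t : Term F ar | ¬ Acc lt t} termSize ⟨tbad, htbad⟩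
  -- every inaccessible term has a size-minimal inaccessible predecessor
  have hstep : ∀ t : Term F ar, ¬ Acc lt t →
      ∃ s, (lt s t ∧ ¬ Acc lt s) ∧ ∀ u, lt u t → ¬ Acc lt u → termSize s ≤ termSize u := by
    intro t ht
    have hne : {s : Term F ar | lt s t ∧ ¬ Acc lt s}.Nonempty := by
      by_contra hemp
      apply ht
      constructor
      intro y hy
      by_contra hy'
      exact hemp ⟨y, hy, hy'⟩
    obtain ⟨s, hs, hsmin⟩ := fz_exists_min _ termSize hne
    exact ⟨s, hs, fun u h1 h2 => hsmin u ⟨h1, h2⟩⟩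
  choose stp hstp1 hstp2 using hstep
  -- the minimal bad sequence
  let g : ℕ → {t : Term F ar // ¬ Acc lt t} := fun n =>
    Nat.rec ⟨t0, ht0⟩ (fun _ p => ⟨stp p.1 p.2, (hstp1 p.1 p.2).2⟩) n
  have hg0 : (g 0).1 = t0 := rfl
  have hglt : ∀ n, lt (g (n+1)).1 (g n).1 := fun n => (hstp1 (g n).1 (g n).2).1
  have hgmin : ∀ n u, lt u (g n).1 → ¬ Acc lt u → termSize (g (n+1)).1 ≤ termSize u :=
    fun n => hstp2 (g n).1 (g n).2
  -- all immediate subterms of members of the bad sequence are accessible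
  have hsubacc : ∀ n (f : F) (a : Fin (ar f) → Term F ar),
      (g n).1 = WType.mk f a → ∀ i, Acc lt (a i) := by
    intro n f a hEq i
    by_contra hni
    have hszlt : termSize (a i) < termSize (g n).1 := by
      rw [hEq]; exact termSize_lt f a i
    match n with
    | 0 =>
      have hle := ht0min (a i) hni
      rw [hg0] at hszlt
      exact Nat.lt_irrefl _ (Nat.lt_of_le_of_lt hle hszlt)
    | Nat.succ m =>
      have hlt' : lt (a i) (g m).1 :=
        htrans _ _ _ (by rw [hEq]; exact hsub f a i) (hglt m)
      have hle := hgmin m (a i) hlt' hni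
      exact Nat.lt_irrefl _ (Nat.lt_of_le_of_lt hle hszlt)
  -- the sequence is descending transitively
  have hchain : ∀ n m, n < m → lt (g m).1 (g n).1 := by
    intro n m hnm
    induction m with
    | zero => omega
    | succ k ih =>
      rcases Nat.lt_succ_iff_lt_or_eq.mp hnm with h | h
      · exact htrans _ _ _ (hglt k) (ih h)
      · subst h; exact hglt n
  -- some root symbol occurs cofinally
  have hf : ∃ f : F, ∀ n, ∃ m, n < m ∧ fzRoot (g m).1 = f := by
    by_contra hno
    push_neg at hno
    choose N hN using hno
    set M := (Finset.univ.sup N) + 1 with hM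
    exact hN (fzRoot (g M).1) M
      (Nat.lt_succ_of_le (Finset.le_sup (Finset.mem_univ _))) rfl
  obtain ⟨f, hfm⟩ := hf
  choose nxt hnxt1 hnxt2 using hfm
  -- indices with root f
  let e : ℕ → ℕ := fun k => Nat.rec (nxt 0) (fun _ m => nxt m) k
  have he_root : ∀ k, fzRoot (g (e k)).1 = f := by
    intro k
    cases k with
    | zero => exact hnxt2 0
    | succ m => exact hnxt2 (e m)
  have he_mono : ∀ k, e k < e (k+1) := fun k => hnxt1 (e k)
  -- extract the argument tuples
  have hA' : ∀ k, ∃ a : Fin (ar f) → Term F ar, (g (e k)).1 = WType.mk f a := by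
    intro k
    have hr := he_root k
    cases hEq : (g (e k)).1 with
    | mk f' a =>
      rw [hEq] at hr
      have : f' = f := hr
      subst this
      exact ⟨a, rfl⟩
  choose A hA using hA'
  -- the tuples form an infinite ltf-descending chain
  have hstepf : ∀ k, ltf f (A (k+1)) (A k) := by
    intro k
    have hlt2 : lt (WType.mk f (A (k+1))) (WType.mk f (A k)) := by
      rw [← hA, ← hA]
      exact hchain _ _ (he_mono k)
    rcases hdec f (A k) (A (k+1)) hlt2 with ⟨i, hi | hi⟩ | h
    · exact absurd (show Acc lt (g (e (k+1))).1 by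
        rw [hA (k+1), hi]; exact hsubacc (e k) f (A k) (hA k) i) (g (e (k+1))).2
    · exact absurd (show Acc lt (g (e (k+1))).1 by
        rw [hA (k+1)]; exact (hsubacc (e k) f (A k) (hA k) i).inv hi) (g (e (k+1))).2
    · exact h
  have hA0 : Acc (ltf f) (A 0) := hacc f (A 0) (hsubacc (e 0) f (A 0) (hA 0))
  exact fz_no_descend hA0 A rfl hstepf
end

section
/- Let F be a finite set of N > 0 function symbols with arities ar, T(F) the ground terms over F, < an irreflexive transitive relation on T(F) containing the subterm relation, and for each f ∈ F a relation <_f on ar(f)-tuples, such that: if f(b) < f(a) then f(b) ≤ a_i for some component a_i of a or b <_f a; and if every component of a tuple a is in the accessible part W(<), then a is in the accessible part W(<_f). Let f_1, …, f_K ∈ F be distinct function symbols and a_i an ar(f_i)-tuple of terms for each i. For a function symbol f define T_{f,0} to be all ar(f)-tuples, T_{f,i} := { b : f(b) < f_i(a_i) } for i ≥ 1, A_{f,i}(b) :⇔ [b ∈ T_{f,i} → (every component of b is in W(<)) → f(b) ∈ W(<)], and IH_{f,i}(a) :⇔ ∀ b <_f a, A_{f,i}(b). Assume for every i = 1, …,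 K: (1) f_{i+1}(a_{i+1}) < f_i(a_i) (for i < K); (2) IH_{f_i, i−1}(a_i); (3) every component of a_i is in W(<). Then f_K(a_K) ∈ W(<). -/
/-!
Call `U ⊆ F` *settled below* `t` if every term `g(b) < t` with `g ∈ U` and accessible arguments
is accessible. By induction on the subterm structure, `t` is accessible once every symbol is
settled below it. If `g` is not yet settled below `t`, well-founded induction along `<_g` (which
`hacc` makes available for tuples of accessible terms) shows `insert g U` settled below each
`g(b) < t`; the decomposition property `hdec` handles the terms `g(c) < g(b)`. Since `F` is
finite, induction on `U` ordered by reverse inclusion settles every symbol. The chain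
`f_1(a_1) > ⋯ > f_K(a_K)` together with (2) and (3) settles `{f_1, …, f_K}` below `f_K(a_K)`.
-/

theorem Fin.rel_of_lt_of_rel_succ {α : Type*} {r : α → α → Prop}
    (htrans : ∀ x y z, r x y → r y z → r x z) {K : ℕ} {t : Fin K → α}
    (hsucc : ∀ (i : Fin K) (h : i.val + 1 < K), r (t ⟨i.val + 1, h⟩) (t i)) :
    ∀ {i j : Fin K}, i < j → r (t j) (t i) := by
  rintro ⟨i, hi⟩ ⟨j, hj⟩ hij
  induction j with
  | zero => exact absurd hij (Nat.not_lt_zero i)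
  | succ j ih =>
    have hstep := hsucc ⟨j, by omega⟩ hj
    rcases Nat.lt_succ_iff_lt_or_eq.mp hij with hlt | rfl
    · exact htrans _ _ _ hstep (ih (by omega) hlt)
    · exact hstep

section SettledBelow

variable {F : Type} {ar : F → ℕ} {lt : Term F ar → Term F ar → Prop}
  {ltf : ∀ f : F, (Fin (ar f) → Term F ar) → (Fin (ar f) → Term F ar) → Prop}

def Term.SettledBelow (lt : Term F ar → Term F ar → Prop) (U : Set F) (t : Term F ar) : Prop :=
  ∀ g ∈ U, ∀ b : Fin (ar g) → Term F ar,
    lt (WType.mk g b) t → (∀ j, Acc lt (b j)) → Acc lt (WType.mk g b)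

theorem Term.acc_mk_of_lt_mk
    (hdec : ∀ (f : F) (a b : Fin (ar f) → Term F ar),
      lt (WType.mk f b) (WType.mk f a) →
      (∃ i, WType.mk f b = a i ∨ lt (WType.mk f b) (a i)) ∨ ltf f b a)
    {g : F} {a b : Fin (ar g) → Term F ar} (ha : ∀ i, Acc lt (a i))
    (hba : lt (WType.mk g b) (WType.mk g a)) (hltf : ltf g b a → Acc lt (WType.mk g b)) :
    Acc lt (WType.mk g b) := by
  rcases hdec g a b hba with ⟨i, heq | hlt⟩ | hb
  · exact heq ▸ ha i
  · exact (ha i).inv hlt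
  · exact hltf hb

section

variable (htrans : ∀ s t u, lt s t → lt t u → lt s u)
include htrans

theorem Term.SettledBelow.of_lt {U : Set F} {s t : Term F ar} (ht : Term.SettledBelow lt U t)
    (hst : lt s t) : Term.SettledBelow lt U s :=
  fun g hg b hb => ht g hg b (htrans _ _ _ hb hst)

theorem Term.acc_of_settledBelow_univ
    (hsub : ∀ (f : F) (a : Fin (ar f) → Term F ar) (i : Fin (ar f)), lt (a i) (WType.mk f a))
    {t : Term F ar} (ht : Term.SettledBelow lt Set.univ t) : Acc lt t := by
  refine Acc.intro t fun s => ?_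
  induction s with
  | mk g b ih =>
    intro hs
    exact ht g trivial b hs fun j => ih j (htrans _ _ _ (hsub g b j) hs)

theorem Term.SettledBelow.insert
    (hdec : ∀ (f : F) (a b : Fin (ar f) → Term F ar),
      lt (WType.mk f b) (WType.mk f a) →
      (∃ i, WType.mk f b = a i ∨ lt (WType.mk f b) (a i)) ∨ ltf f b a)
    {U : Set F} {g : F} {b : Fin (ar g) → Term F ar} {t : Term F ar}
    (ht : Term.SettledBelow lt U t) (hbt : lt (WType.mk g b) t) (hb : ∀ j, Acc lt (b j))
    (hbelow : ∀ c, ltf g c b → lt (WType.mk g c) t → (∀ j, Acc lt (c j)) →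
      Acc lt (WType.mk g c)) :
    Term.SettledBelow lt (insert g U) (WType.mk g b) := by
  rintro h (rfl | hh) c hc hcacc
  · exact Term.acc_mk_of_lt_mk hdec hb hc fun hcb => hbelow c hcb (htrans _ _ _ hc hbt) hcacc
  · exact ht.of_lt htrans hbt h hh c hc hcacc

theorem Term.acc_of_settledBelow [Finite F]
    (hsub : ∀ (f : F) (a : Fin (ar f) → Term F ar) (i : Fin (ar f)), lt (a i) (WType.mk f a))
    (hdec : ∀ (f : F) (a b : Fin (ar f) → Term F ar),
      lt (WType.mk f b) (WType.mk f a) →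
      (∃ i, WType.mk f b = a i ∨ lt (WType.mk f b) (a i)) ∨ ltf f b a)
    (hacc : ∀ (f : F) (a : Fin (ar f) → Term F ar), (∀ i, Acc lt (a i)) → Acc (ltf f) a)
    (U : Set F) {t : Term F ar} (ht : Term.SettledBelow lt U t) : Acc lt t := by
  induction U using WellFoundedGT.induction generalizing t with
  | _ U ih =>
  refine Term.acc_of_settledBelow_univ htrans hsub fun g _ b hbt hb => ?_
  by_cases hg : g ∈ U
  · exact ht g hg b hbt hb
  suffices key : ∀ b, Acc (ltf g) b → lt (WType.mk g b) t → (∀ j, Acc lt (b j)) →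
      Acc lt (WType.mk g b) from key b (hacc g b hb) hbt hb
  intro b hb_acc
  induction hb_acc with
  | intro b _ ihb =>
    intro hbt hb
    exact ih (insert g U) (Set.ssubset_insert hg) (ht.insert htrans hdec hbt hb ihb)

end

end SettledBelow

theorem ferreira_zantema_main_lemma
    {F : Type} [Fintype F] (ar : F → ℕ)
    (lt : Term F ar → Term F ar → Prop)
    (ltf : ∀ f : F, (Fin (ar f) → Term F ar) → (Fin (ar f) → Term F ar) → Prop)
    (htrans : ∀ s t u, lt s t → lt t u → lt s u)
    (hsub : ∀ (f : F) (a : Fin (ar f) → Term F ar) (i : Fin (ar f)),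
      lt (a i) (WType.mk f a))
    (hdec : ∀ (f : F) (a b : Fin (ar f) → Term F ar),
      lt (WType.mk f b) (WType.mk f a) →
      (∃ i, WType.mk f b = a i ∨ lt (WType.mk f b) (a i)) ∨ ltf f b a)
    (hacc : ∀ (f : F) (a : Fin (ar f) → Term F ar),
      (∀ i, Acc lt (a i)) → Acc (ltf f) a)
    (K : ℕ) (hK : 0 < K)
    (f : Fin K → F)
    (a : ∀ i : Fin K, Fin (ar (f i)) → Term F ar)
    -- (1): f_{i+1}(a_{i+1}) < f_i(a_i)
    (h1 : ∀ (i : Fin K) (h : i.val + 1 < K),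
      lt (WType.mk (f ⟨i.val + 1, h⟩) (a ⟨i.val + 1, h⟩)) (WType.mk (f i) (a i)))
    -- (2): IH_{f_i, i-1}(a_i)
    (h2 : ∀ (i : Fin K) (b : Fin (ar (f i)) → Term F ar), ltf (f i) b (a i) →
      (∀ h : 0 < i.val,
         lt (WType.mk (f i) b)
            (WType.mk (f ⟨i.val - 1, by omega⟩) (a ⟨i.val - 1, by omega⟩))) →
      (∀ j, Acc lt (b j)) → Acc lt (WType.mk (f i) b))
    -- (3): every component of a_i is in W(<)
    (h3 : ∀ (i : Fin K) (j : Fin (ar (f i))), Acc lt (a i j)) :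
    Acc lt (WType.mk (f ⟨K - 1, by omega⟩) (a ⟨K - 1, by omega⟩)) := by
  have hchain : ∀ {i j : Fin K}, i < j → lt (WType.mk (f j) (a j)) (WType.mk (f i) (a i)) :=
    Fin.rel_of_lt_of_rel_succ (t := fun i => WType.mk (f i) (a i)) htrans h1
  refine Term.acc_of_settledBelow htrans hsub hdec hacc (Set.range f) ?_
  rintro _ ⟨i, rfl⟩ b hb hbacc
  have hbi : lt (WType.mk (f i) b) (WType.mk (f i) (a i)) := by
    rcases (show i.val ≤ K - 1 by omega).eq_or_lt with hlast | hbefore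
    · obtain rfl : i = ⟨K - 1, Nat.sub_one_lt_of_lt hK⟩ := Fin.ext hlast
      exact hb
    · exact htrans _ _ _ hb (hchain hbefore)
  refine Term.acc_mk_of_lt_mk hdec (h3 i) hbi fun hltf => h2 i b hltf (fun hpos => ?_) hbacc
  have hprev : (⟨i.val - 1, by omega⟩ : Fin K) < i := Fin.lt_def.mpr (Nat.sub_lt hpos one_pos)
  exact htrans _ _ _ hbi (hchain hprev)
end

section
/- Let F be a finite set of function symbols with arities ar, T(F) the ground terms over F, < an irreflexive transitive relation on T(F) containing the subterm relation, and for each f ∈ F a relation <_f on ar(f)-tuples, such that: if f(b) < f(a) then f(b) ≤ a_i for some component a_i of a or b <_f a; and if every component of a tuple a is in the accessible part W(<), then a is in the accessible part W(<_f). Then for every f ∈ F, the predicate A(b) :⇔ [(every component of b is in W(<)) → f(b) ∈ W(<)] is progressive with respect to <_f: for every ar(f)-tuple a, if A(b) holds for every b with b <_f a, then A(a) holds. -/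
/-!
In fact `<` is well-founded, which gives the conclusion outright.

A *bound* assigns to each symbol `f` either nothing or a term `f(e)` whose arguments are
accessible. Bounds are compared lexicographically along a well-order of `F`, each coordinate by
`<_f` with "nothing" on top; by the accessibility hypothesis on `<_f` and finiteness of `F` this
is well-founded. By induction on bounds `σ`, every `f(c)` with accessible arguments lying below
all bounds of `σ` is accessible: if `σ` bounds `f` by `f(e)`, the decomposition hypothesis gives
either `f(c) ≤ eᵢ`, which is accessible, or `c <_f e`. In that case, or when `σ` does not bound `f`,
lowering the bound at `f` to `f(c)` yields a smaller `σ'` below which every `y < f(c)` lies, and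
the arguments of such `y` are accessible by structural induction on `y`.
-/

def Option.TopRel {α : Type*} (r : α → α → Prop) : Option α → Option α → Prop
  | some a, some b => r a b
  | some _, none => True
  | none, _ => False

namespace Option.TopRel

variable {α : Type*} {r : α → α → Prop}

theorem acc_some {a : α} (h : Acc r a) : Acc (TopRel r) (some a) := by
  induction h with
  | intro a _ ih =>
    refine ⟨_, fun b hb => ?_⟩
    cases b with
    | none => exact hb.elim
    | some b => exact ih b hb

theorem wellFounded (h : WellFounded r) : WellFounded (TopRel r) := by
  refine ⟨fun a => ?_⟩
  cases a with
  | some a => exact acc_some (h.apply a)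
  | none =>
    refine ⟨_, fun b hb => ?_⟩
    cases b with
    | none => exact hb.elim
    | some b => exact acc_some (h.apply b)

end Option.TopRel

theorem Pi.lex_update_self {ι : Type*} {β : ι → Type*} [DecidableEq ι] {r : ι → ι → Prop}
    [Std.Irrefl r] {s : ∀ i, β i → β i → Prop} (x : ∀ i, β i) {i : ι} {b : β i}
    (h : s i b (x i)) : Pi.Lex r (fun {i} => s i) (Function.update x i b) x :=
  ⟨i, fun _ hj => Function.update_of_ne (ne_of_irrefl hj) _ _, by rwa [Function.update_self]⟩

namespace FerreiraZantema

variable {F : Type} {ar : F → ℕ} {lt : Term F ar → Term F ar → Prop}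

variable (lt) in
def AccTuple (f : F) : Type := {a : Fin (ar f) → Term F ar // ∀ i, Acc lt (a i)}

variable (lt) in
abbrev Bounds : Type := ∀ f : F, Option (AccTuple lt f)

def Bounds.Below (σ : Bounds lt) (t : Term F ar) : Prop :=
  ∀ f e, σ f = some e → lt t (WType.mk f e.1)

def Bounds.Lt (ltf : ∀ f : F, (Fin (ar f) → Term F ar) → (Fin (ar f) → Term F ar) → Prop) :
    Bounds lt → Bounds lt → Prop :=
  Pi.Lex WellOrderingRel fun {f} => Option.TopRel (InvImage (ltf f) Subtype.val)

variable {ltf : ∀ f : F, (Fin (ar f) → Term F ar) → (Fin (ar f) → Term F ar) → Prop}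

theorem Bounds.lt_wellFounded [Finite F]
    (hacc : ∀ (f : F) (a : Fin (ar f) → Term F ar), (∀ i, Acc lt (a i)) → Acc (ltf f) a) :
    WellFounded (Bounds.Lt (lt := lt) ltf) :=
  Pi.Lex.wellFounded _ fun f =>
    Option.TopRel.wellFounded ⟨fun e => InvImage.accessible _ (hacc f e.1 e.2)⟩

theorem Bounds.below_update [DecidableEq F] (htrans : ∀ s t u, lt s t → lt t u → lt s u)
    {σ : Bounds lt} {g : F} {c : AccTuple lt g} (hc : σ.Below (WType.mk g c.1))
    {y : Term F ar} (hy : lt y (WType.mk g c.1)) :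
    Bounds.Below (Function.update σ g (some c)) y := by
  intro f e he
  by_cases hfg : f = g
  · subst hfg
    rw [Function.update_self, Option.some.injEq] at he
    exact he ▸ hy
  · rw [Function.update_of_ne hfg] at he
    exact htrans _ _ _ hy (hc f e he)

theorem acc_of_forall_lt_below (htrans : ∀ s t u, lt s t → lt t u → lt s u)
    (hsub : ∀ (f : F) (a : Fin (ar f) → Term F ar) (i : Fin (ar f)), lt (a i) (WType.mk f a))
    {σ : Bounds lt}
    (hσ : ∀ g c, σ.Below (WType.mk g c) → (∀ i, Acc lt (c i)) → Acc lt (WType.mk g c))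
    {t : Term F ar} (ht : ∀ y, lt y t → σ.Below y) : Acc lt t := by
  refine ⟨_, fun y => ?_⟩
  induction y with
  | mk g d ih =>
    intro hy
    exact hσ g d (ht _ hy) fun i => ih i (htrans _ _ _ (hsub g d i) hy)

theorem acc_mk_of_below [Finite F] [DecidableEq F] (htrans : ∀ s t u, lt s t → lt t u → lt s u)
    (hsub : ∀ (f : F) (a : Fin (ar f) → Term F ar) (i : Fin (ar f)), lt (a i) (WType.mk f a))
    (hdec : ∀ (f : F) (a b : Fin (ar f) → Term F ar),
      lt (WType.mk f b) (WType.mk f a) →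
      (∃ i, WType.mk f b = a i ∨ lt (WType.mk f b) (a i)) ∨ ltf f b a)
    (hacc : ∀ (f : F) (a : Fin (ar f) → Term F ar), (∀ i, Acc lt (a i)) → Acc (ltf f) a)
    (σ : Bounds lt) (g : F) (c : Fin (ar g) → Term F ar) (hbelow : σ.Below (WType.mk g c))
    (hc : ∀ i, Acc lt (c i)) : Acc lt (WType.mk g c) := by
  induction σ using (Bounds.lt_wellFounded hacc).induction generalizing g c with
  | _ σ ih =>
  have lower : Bounds.Lt ltf (Function.update σ g (some ⟨c, hc⟩)) σ → Acc lt (WType.mk g c) :=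
    fun hlt => acc_of_forall_lt_below htrans hsub (ih _ hlt)
      fun _ hy => Bounds.below_update (c := ⟨c, hc⟩) htrans hbelow hy
  cases hσg : σ g with
  | none => exact lower (Pi.lex_update_self σ (by rw [hσg]; trivial))
  | some e =>
    rcases hdec g e.1 c (hbelow g e hσg) with ⟨i, heq | hlt⟩ | hltf
    · exact heq ▸ e.2 i
    · exact (e.2 i).inv hlt
    · exact lower (Pi.lex_update_self σ (by rw [hσg]; exact hltf))

theorem wellFounded [Finite F] (htrans : ∀ s t u, lt s t → lt t u → lt s u)
    (hsub : ∀ (f : F) (a : Fin (ar f) → Term F ar) (i : Fin (ar f)), lt (a i) (WType.mk f a))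
    (hdec : ∀ (f : F) (a b : Fin (ar f) → Term F ar),
      lt (WType.mk f b) (WType.mk f a) →
      (∃ i, WType.mk f b = a i ∨ lt (WType.mk f b) (a i)) ∨ ltf f b a)
    (hacc : ∀ (f : F) (a : Fin (ar f) → Term F ar), (∀ i, Acc lt (a i)) → Acc (ltf f) a) :
    WellFounded lt := by
  classical
  refine ⟨fun t => ?_⟩
  induction t with
  | mk f a ih => exact acc_mk_of_below htrans hsub hdec hacc (fun _ => none) f a nofun ih

end FerreiraZantema

theorem ferreira_zantema_progressive_general
    {F : Type} [Fintype F] (ar : F → ℕ)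
    (lt : Term F ar → Term F ar → Prop)
    (ltf : ∀ f : F, (Fin (ar f) → Term F ar) → (Fin (ar f) → Term F ar) → Prop)
    (htrans : ∀ s t u, lt s t → lt t u → lt s u)
    (hsub : ∀ (f : F) (a : Fin (ar f) → Term F ar) (i : Fin (ar f)),
      lt (a i) (WType.mk f a))
    (hdec : ∀ (f : F) (a b : Fin (ar f) → Term F ar),
      lt (WType.mk f b) (WType.mk f a) →
      (∃ i, WType.mk f b = a i ∨ lt (WType.mk f b) (a i)) ∨ ltf f b a)
    (hacc : ∀ (f : F) (a : Fin (ar f) → Term F ar),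
      (∀ i, Acc lt (a i)) → Acc (ltf f) a) :
    ∀ (f : F) (a : Fin (ar f) → Term F ar),
      (∀ b : Fin (ar f) → Term F ar, ltf f b a →
        ((∀ i, Acc lt (b i)) → Acc lt (WType.mk f b))) →
      ((∀ i, Acc lt (a i)) → Acc lt (WType.mk f a)) :=
  fun _ _ _ _ => (FerreiraZantema.wellFounded htrans hsub hdec hacc).apply _

theorem ferreira_zantema_progressive
    {F : Type} [Fintype F] (ar : F → ℕ)
    (lt : Term F ar → Term F ar → Prop)
    (ltf : ∀ f : F, (Fin (ar f) → Term F ar) → (Fin (ar f) → Term F ar) → Prop)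
    (hirr : ∀ t, ¬ lt t t)
    (htrans : ∀ s t u, lt s t → lt t u → lt s u)
    (hsub : ∀ (f : F) (a : Fin (ar f) → Term F ar) (i : Fin (ar f)),
      lt (a i) (WType.mk f a))
    (hdec : ∀ (f : F) (a b : Fin (ar f) → Term F ar),
      lt (WType.mk f b) (WType.mk f a) →
      (∃ i, WType.mk f b = a i ∨ lt (WType.mk f b) (a i)) ∨ ltf f b a)
    (hacc : ∀ (f : F) (a : Fin (ar f) → Term F ar),
      (∀ i, Acc lt (a i)) → Acc (ltf f) a) :
    ∀ (f : F) (a : Fin (ar f) → Term F ar),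
      (∀ b : Fin (ar f) → Term F ar, ltf f b a →
        ((∀ i, Acc lt (b i)) → Acc lt (WType.mk f b))) →
      ((∀ i, Acc lt (a i)) → Acc lt (WType.mk f a)) :=
  ferreira_zantema_progressive_general ar lt ltf htrans hsub hdec hacc
end

section
/- Let F be a finite set of function symbols with arities ar, T(F) the ground terms over F, < an irreflexive transitive relation on T(F) containing the subterm relation, and for each f ∈ F a relation <_f on ar(f)-tuples, such that: if f(b) < f(a) then f(b) ≤ a_i for some component a_i of a or b <_f a; and if every component of a tuple a is in the accessible part W(<), then a is in the accessible part W(<_f). Then for every f ∈ F and every ar(f)-tuple a: if every component of a is in W(<), then f(a) ∈ W(<). -/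
/-- Size of a term. -/
def TermSz {F : Type} {ar : F → ℕ} : WType (fun f : F => Fin (ar f)) → ℕ
  | WType.mk _ c => (Finset.univ.sup fun i => TermSz (c i)) + 1

theorem TermSz_arg_lt {F : Type} {ar : F → ℕ} (f : F)
    (c : Fin (ar f) → WType (fun f : F => Fin (ar f))) (i : Fin (ar f)) :
    TermSz (c i) < TermSz (WType.mk f c) := by
  have : TermSz (c i) ≤ Finset.univ.sup fun j => TermSz (c j) :=
    Finset.le_sup (f := fun j => TermSz (c j)) (Finset.mem_univ i)
  simpa [TermSz] using Nat.lt_succ_of_le this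

/-- Head symbol of a term. -/
def TermHd {F : Type} {ar : F → ℕ} : WType (fun f : F => Fin (ar f)) → F
  | WType.mk g _ => g

theorem TermHd_eta {F : Type} {ar : F → ℕ} (t : WType (fun f : F => Fin (ar f))) :
    ∃ b, t = WType.mk (TermHd t) b := by
  cases t with
  | mk g b => exact ⟨b, rfl⟩

theorem ferreira_zantema_acc_step
    {F : Type} [Fintype F] (ar : F → ℕ)
    (lt : Term F ar → Term F ar → Prop)
    (ltf : ∀ f : F, (Fin (ar f) → Term F ar) → (Fin (ar f) → Term F ar) → Prop)
    (hirr : ∀ t, ¬ lt t t)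
    (htrans : ∀ s t u, lt s t → lt t u → lt s u)
    (hsub : ∀ (f : F) (a : Fin (ar f) → Term F ar) (i : Fin (ar f)),
      lt (a i) (WType.mk f a))
    (hdec : ∀ (f : F) (a b : Fin (ar f) → Term F ar),
      lt (WType.mk f b) (WType.mk f a) →
      (∃ i, WType.mk f b = a i ∨ lt (WType.mk f b) (a i)) ∨ ltf f b a)
    (hacc : ∀ (f : F) (a : Fin (ar f) → Term F ar),
      (∀ i, Acc lt (a i)) → Acc (ltf f) a) :
    ∀ (f : F) (a : Fin (ar f) → Term F ar),
      (∀ i, Acc lt (a i)) → Acc lt (WType.mk f a) := by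
  classical
  intro f a ha
  by_contra h0
  -- step: a size-minimal non-accessible predecessor
  have step : ∀ t, ¬ Acc lt t → ∃ s, lt s t ∧ ¬ Acc lt s ∧
      ∀ u, lt u t → ¬ Acc lt u → TermSz s ≤ TermSz u := by
    intro t ht
    have h1 : ∃ s, lt s t ∧ ¬ Acc lt s := by
      by_contra h2
      push_neg at h2
      exact ht (Acc.intro t fun s hs => h2 s hs)
    have hP : ∃ n, ∃ s, lt s t ∧ ¬ Acc lt s ∧ TermSz s = n := by
      obtain ⟨s, hs1, hs2⟩ := h1
      exact ⟨TermSz s, s, hs1, hs2, rfl⟩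
    obtain ⟨s, hs1, hs2, hs3⟩ := Nat.find_spec hP
    refine ⟨s, hs1, hs2, fun u hu hu2 => ?_⟩
    rw [hs3]
    exact Nat.find_le ⟨u, hu, hu2, rfl⟩
  -- the minimal bad chain
  let c : ℕ → {t : Term F ar // ¬ Acc lt t} := fun n => Nat.rec
    ⟨WType.mk f a, h0⟩
    (fun _ p => ⟨(step p.1 p.2).choose, (step p.1 p.2).choose_spec.2.1⟩) n
  have hc0 : (c 0).1 = WType.mk f a := rfl
  have hcsucc : ∀ n, lt (c (n+1)).1 (c n).1 :=
    fun n => (step (c n).1 (c n).2).choose_spec.1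
  have hcmin : ∀ n u, lt u (c n).1 → ¬ Acc lt u → TermSz (c (n+1)).1 ≤ TermSz u :=
    fun n => (step (c n).1 (c n).2).choose_spec.2.2
  have hlt : ∀ n m, n < m → lt (c m).1 (c n).1 := by
    intro n m h
    induction h with
    | refl => exact hcsucc n
    | step _ ih => exact htrans _ _ _ (hcsucc _) ih
  -- all arguments of each chain element are accessible
  have haccargs : ∀ n (g : F) (b : Fin (ar g) → Term F ar),
      (c n).1 = WType.mk g b → ∀ i, Acc lt (b i) := by
    intro n g b hb i
    cases n with
    | zero =>
      have h' : (WType.mk f a : Term F ar) = WType.mk g b := by rw [← hc0]; exact hb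
      injection h' with h1 h2
      subst h1
      have h2' : a = b := eq_of_heq h2
      subst h2'
      exact ha i
    | succ m =>
      by_contra hacc'
      have h1 : lt (b i) (c (m+1)).1 := by rw [hb]; exact hsub g b i
      have h2 : lt (b i) (c m).1 := htrans _ _ _ h1 (hcsucc m)
      have h3 := hcmin m (b i) h2 hacc'
      have h4 : TermSz (b i) < TermSz (c (m+1)).1 := by
        rw [hb]; exact TermSz_arg_lt g b i
      omega
  -- same-head steps descend in ltf
  have hstep2 : ∀ (g : F) n m (bn bm : Fin (ar g) → Term F ar), n < m →
      (c n).1 = WType.mk g bn → (c m).1 = WType.mk g bm → ltf g bm bn := by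
    intro g n m bn bm hnm hn hm
    have hl : lt (WType.mk g bm) (WType.mk g bn) := by
      rw [← hn, ← hm]; exact hlt n m hnm
    rcases hdec g bn bm hl with ⟨i, hi⟩ | h
    · exfalso
      have hai : Acc lt (bn i) := haccargs n g bn hn i
      have hAm : Acc lt (WType.mk g bm) := by
        rcases hi with h | h
        · exact h ▸ hai
        · exact hai.inv h
      exact (c m).2 (hm ▸ hAm)
    · exact h
  -- pigeonhole on heads
  obtain ⟨g, hg⟩ := Finite.exists_infinite_fiber (fun n => TermHd (c n).1)
  have hginf : Set.Infinite {n | TermHd (c n).1 = g} := by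
    rw [← Set.infinite_coe_iff]
    exact hg
  have hgex : ∀ n, ∃ m, n < m ∧ (∃ b, (c m).1 = WType.mk g b) := by
    intro n
    obtain ⟨m, hm, hnm⟩ := hginf.exists_gt n
    have := TermHd_eta (c m).1
    rw [hm] at this
    exact ⟨m, hnm, this⟩
  -- starting point
  obtain ⟨n0, hn0⟩ := hgex 0
  obtain ⟨b0, hb0⟩ := hn0.2
  have hb0acc : Acc (ltf g) b0 := hacc g b0 (haccargs n0 g b0 hb0)
  -- no infinite descent in ltf g
  have main : ∀ x : Fin (ar g) → Term F ar, Acc (ltf g) x →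
      ∀ n, (c n).1 = WType.mk g x → False := by
    intro x hx
    induction hx with
    | intro x _ ih =>
      intro n hn
      obtain ⟨m, hnm, bm, hbm⟩ := hgex n
      exact ih bm (hstep2 g n m x bm hnm hn hbm) m hbm
  exact main b0 hb0acc n0 hb0
end
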